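/- arXiv:1501.01389 — 3 statements merged into one kernel-verified Lean document; each statement's English description precedes it below -/
import Mathlib

section
/- For a morphism f : X ⟶ Y of A, viewed as an object of Arrow(A), the following are equivalent: (a) f has the lifting property against all counits: for every object g of Arrow(A) and every morphism φ : f ⟶ g in Arrow(A), there exists ψ : f ⟶ FG(g) in Arrow(A) with ψ followed by ε_g equal to φ (i.e. f is E-projective); (b) f is a split monomorphism in A, i.e. there exists r : Y ⟶ X with f ≫ r = 𝟙_X. -/
open CategoryTheory Limits

universe w v u

variable (A : Type u) [Category.{v} A] [Abelian A]

/-- The functor `F : A × A ⥤ Arrow A` sending `(X, Y)` to the object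
`biprod.inl : X ⟶ X ⊞ Y` of the arrow category. -/
@[simps]
noncomputable def ArrF : A × A ⥤ Arrow A where
  obj p := Arrow.mk (biprod.inl : p.1 ⟶ p.1 ⊞ p.2)
  map {p q} φ := Arrow.homMk (u := φ.1) (v := biprod.map φ.1 φ.2) (by simp)

/-- The forgetful functor `G : Arrow A ⥤ A × A` sending an object `f : X ⟶ Y` of the
arrow category to the pair `(X, Y)`. -/
@[simps]
def ArrG : Arrow A ⥤ A × A where
  obj f := (f.left, f.right)
  map φ := (φ.left, φ.right)

variable {A}

/-- The counit morphism `ε_f : FG(f) ⟶ f`, whose domain component is `𝟙 X` and whose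
codomain component is `biprod.desc f 𝟙 : X ⊞ Y ⟶ Y`. -/
noncomputable def arrCounit (f : Arrow A) : (ArrF A).obj ((ArrG A).obj f) ⟶ f :=
  Arrow.homMk (u := 𝟙 f.left) (v := biprod.desc f.hom (𝟙 f.right))
    (by first
      | exact (Category.id_comp _).trans (biprod.inl_desc _ _).symm
      | (dsimp [ArrF, ArrG]; simp)
      | simp [ArrF, ArrG])

/-! A lift of `𝟙 f` through `ε_f` has domain component `𝟙 X`, so the first coordinate of its
codomain component `Y ⟶ X ⊞ Y` retracts `f`. Conversely, a retraction `r` of `f` lifts any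
`φ : f ⟶ g` by correcting `r ≫ φ.left` in the second coordinate. -/

section

variable {f : Arrow A}

lemma hom_comp_right_comp_biprod_fst {X Y : A} (ψ : f ⟶ Arrow.mk (biprod.inl : X ⟶ X ⊞ Y)) :
    f.hom ≫ ψ.right ≫ biprod.fst = ψ.left := by
  rw [← Arrow.w_assoc]
  simp

lemma retraction_of_comp_arrCounit_eq_id {ψ : f ⟶ (ArrF A).obj ((ArrG A).obj f)}
    (hψ : ψ ≫ arrCounit f = 𝟙 f) : f.hom ≫ ψ.right ≫ biprod.fst = 𝟙 f.left := by
  have hl : ψ.left = 𝟙 f.left := (Category.comp_id _).symm.trans (Arrow.hom.congr_left hψ)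
  exact (hom_comp_right_comp_biprod_fst ψ).trans hl

/-- The second coordinate of the codomain component vanishes on `f` by the commutative square
of `φ`. -/
noncomputable def liftOfRetraction {r : f.right ⟶ f.left} (hr : f.hom ≫ r = 𝟙 f.left)
    {g : Arrow A} (φ : f ⟶ g) : f ⟶ Arrow.mk (biprod.inl : g.left ⟶ g.left ⊞ g.right) :=
  Arrow.homMk φ.left (biprod.lift (r ≫ φ.left) (φ.right - r ≫ φ.left ≫ g.hom)) (by
    apply biprod.hom_ext <;> simp [reassoc_of% hr])

lemma liftOfRetraction_comp_arrCounit {r : f.right ⟶ f.left} (hr : f.hom ≫ r = 𝟙 f.left)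
    {g : Arrow A} (φ : f ⟶ g) : liftOfRetraction hr φ ≫ arrCounit g = φ := by
  ext
  · exact Category.comp_id φ.left
  · change biprod.lift _ _ ≫ biprod.desc g.hom (𝟙 g.right) = φ.right
    simp

end

/-- an object `f : X ⟶ Y` of `Arrow A` has the left lifting property
against all the counits `ε_g : FG(g) ⟶ g` (i.e. `f` is `E`-projective) if and only if
`f` is a split monomorphism in `A`, i.e. it admits a retraction. -/
theorem statement8 (f : Arrow A) :
    (∀ (g : Arrow A) (φ : f ⟶ g),
        ∃ ψ : f ⟶ (ArrF A).obj ((ArrG A).obj g), ψ ≫ arrCounit g = φ) ↔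
      ∃ r : f.right ⟶ f.left, f.hom ≫ r = 𝟙 f.left := by
  constructor
  · intro hlift
    obtain ⟨ψ, hψ⟩ := hlift f (𝟙 f)
    exact ⟨_, retraction_of_comp_arrCounit_eq_id hψ⟩
  · rintro ⟨r, hr⟩ g φ
    exact ⟨liftOfRetraction hr φ, liftOfRetraction_comp_arrCounit hr φ⟩
end

section
/- Let h : Z' ⟶ Z be a morphism in an abelian category A. The following are equivalent: (a) for every compatible-splitting datum (with h as right vertical map) there exist retractions r' : Y' ⟶ X' of i' and r : Y ⟶ X of i such that r' ≫ f = g ≫ r; (b) for every compatible-splitting datum (with h as right vertical map) there exist sections s' : Z' ⟶ Y' of π' and s : Z ⟶ Y of π such that s' ≫ g = h ≫ s; (c) h is a split monomorphism, i.e. there exists r : Z ⟶ Z' with h ≫ r = 𝟙_{Z'}. -/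
open CategoryTheory Limits ZeroObject

universe v u

/-!
Let `(f, g, h)` map the split sequence `X' → Y' → Z'` (splitting `r'`, `s'`) to `X → Y → Z`, and
let `r` be any retraction of `i`. The defect `d = g ≫ r - r' ≫ f` vanishes on `i'`, hence
`d = π' ≫ s' ≫ d`. If `h ≫ ρ = 𝟙`, then `g ≫ π ≫ ρ ≫ s' ≫ d = π' ≫ h ≫ ρ ≫ s' ≫ d = d`, so
`r - π ≫ ρ ≫ s' ≫ d` is a retraction of `i` compatible with `r'`; sections are corrected dually.
Conversely, testing against the morphism `(0, biprod.lift (±𝟙) h, h)` from `0 → Z' → Z'` to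
`Z' → Z' ⊞ Z → Z` turns a compatible retraction or section into a retraction of `h`.
-/

namespace CategoryTheory.ShortComplex

variable {C : Type*} [Category C] [Preadditive C] {S' S : ShortComplex C}

theorem Splitting.exists_retraction_comp_eq (σ' : S'.Splitting) (φ : S' ⟶ S)
    {r₀ : S.X₂ ⟶ S.X₁} (hr₀ : S.f ≫ r₀ = 𝟙 _) {ρ : S.X₃ ⟶ S'.X₃} (hρ : φ.τ₃ ≫ ρ = 𝟙 _) :
    ∃ r : S.X₂ ⟶ S.X₁, S.f ≫ r = 𝟙 _ ∧ σ'.r ≫ φ.τ₁ = φ.τ₂ ≫ r := by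
  set d := φ.τ₂ ≫ r₀ - σ'.r ≫ φ.τ₁
  have hd : S'.f ≫ d = 0 := by
    rw [Preadditive.comp_sub, ← φ.comm₁₂_assoc, hr₀, σ'.f_r_assoc, Category.comp_id, sub_self]
  have hd_fac : S'.g ≫ σ'.s ≫ d = d := by
    rw [← Category.assoc, σ'.g_s, Preadditive.sub_comp, Category.assoc, hd, comp_zero,
      sub_zero, Category.id_comp]
  have hcorr : φ.τ₂ ≫ S.g ≫ ρ ≫ σ'.s ≫ d = d := by
    rw [φ.comm₂₃_assoc, reassoc_of% hρ, hd_fac]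
  refine ⟨r₀ - S.g ≫ ρ ≫ σ'.s ≫ d, by simp [hr₀], ?_⟩
  rw [Preadditive.comp_sub, hcorr]
  simp [d]

theorem Splitting.exists_section_comp_eq (σ : S.Splitting) (φ : S' ⟶ S)
    {s₀ : S'.X₃ ⟶ S'.X₂} (hs₀ : s₀ ≫ S'.g = 𝟙 _) {ρ : S.X₃ ⟶ S'.X₃} (hρ : φ.τ₃ ≫ ρ = 𝟙 _) :
    ∃ s : S.X₃ ⟶ S.X₂, s ≫ S.g = 𝟙 _ ∧ s₀ ≫ φ.τ₂ = φ.τ₃ ≫ s := by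
  set d := φ.τ₃ ≫ σ.s - s₀ ≫ φ.τ₂
  have hd : d ≫ S.g = 0 := by
    rw [Preadditive.sub_comp, Category.assoc, Category.assoc, σ.s_g, φ.comm₂₃, reassoc_of% hs₀,
      Category.comp_id, sub_self]
  have hd_fac : (d ≫ σ.r) ≫ S.f = d := by
    rw [Category.assoc, σ.r_f, Preadditive.comp_sub, reassoc_of% hd, zero_comp, sub_zero,
      Category.comp_id]
  have hcorr : φ.τ₃ ≫ ρ ≫ (d ≫ σ.r) ≫ S.f = d := by
    rw [reassoc_of% hρ, hd_fac]
  refine ⟨σ.s - ρ ≫ (d ≫ σ.r) ≫ S.f, by simp, ?_⟩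
  rw [Preadditive.comp_sub, hcorr]
  simp [d]

end CategoryTheory.ShortComplex

theorem CategoryTheory.Limits.biprod.lift_neg_id_comp_eq_zero_iff {C : Type*} [Category C]
    [Preadditive C] {Z' Z : C} [HasBinaryBiproduct Z' Z] (h : Z' ⟶ Z)
    {r : Z' ⊞ Z ⟶ Z'} (hr : biprod.inl ≫ r = 𝟙 Z') :
    biprod.lift (-𝟙 Z') h ≫ r = 0 ↔ h ≫ biprod.inr ≫ r = 𝟙 Z' := by
  rw [biprod.lift_eq, Preadditive.add_comp, Category.assoc, Category.assoc, hr,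
    Preadditive.neg_comp, Category.id_comp, neg_add_eq_zero, eq_comm]

/-- for a morphism `h : Z' ⟶ Z` in an abelian category `A`, the following
are equivalent: (a) every compatible-splitting datum with `h` as right vertical map
admits compatible retractions; (b) every compatible-splitting datum with `h` as right
vertical map admits compatible sections; (c) `h` is a split monomorphism. -/
theorem statement11 {A : Type u} [Category.{v} A] [Abelian A]
    {Z' Z : A} (h : Z' ⟶ Z) :
    List.TFAE [
      ∀ (X' Y' X Y : A) (i' : X' ⟶ Y') (π' : Y' ⟶ Z') (i : X ⟶ Y) (π : Y ⟶ Z)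
        (f : X' ⟶ X) (g : Y' ⟶ Y) (w' : i' ≫ π' = 0) (w : i ≫ π = 0),
        (ShortComplex.mk i' π' w').ShortExact → (ShortComplex.mk i π w).ShortExact →
        Nonempty (ShortComplex.mk i' π' w').Splitting →
        Nonempty (ShortComplex.mk i π w).Splitting →
        i' ≫ g = f ≫ i → π' ≫ h = g ≫ π →
        ∃ (r' : Y' ⟶ X') (r : Y ⟶ X), i' ≫ r' = 𝟙 X' ∧ i ≫ r = 𝟙 X ∧ r' ≫ f = g ≫ r,
      ∀ (X' Y' X Y : A) (i' : X' ⟶ Y') (π' : Y' ⟶ Z') (i : X ⟶ Y) (π : Y ⟶ Z)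
        (f : X' ⟶ X) (g : Y' ⟶ Y) (w' : i' ≫ π' = 0) (w : i ≫ π = 0),
        (ShortComplex.mk i' π' w').ShortExact → (ShortComplex.mk i π w).ShortExact →
        Nonempty (ShortComplex.mk i' π' w').Splitting →
        Nonempty (ShortComplex.mk i π w).Splitting →
        i' ≫ g = f ≫ i → π' ≫ h = g ≫ π →
        ∃ (s' : Z' ⟶ Y') (s : Z ⟶ Y), s' ≫ π' = 𝟙 Z' ∧ s ≫ π = 𝟙 Z ∧ s' ≫ g = h ≫ s,
      ∃ r : Z ⟶ Z', h ≫ r = 𝟙 Z'] := by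
  tfae_have 3 → 1 := by
    rintro ⟨ρ, hρ⟩ X' Y' X Y i' π' i π f g w' w - - ⟨σ'⟩ ⟨σ⟩ comm₁₂ comm₂₃
    obtain ⟨r, hr, hcomm⟩ := σ'.exists_retraction_comp_eq ⟨f, g, h, comm₁₂.symm, comm₂₃.symm⟩ σ.f_r hρ
    exact ⟨σ'.r, r, σ'.f_r, hr, hcomm⟩
  tfae_have 3 → 2 := by
    rintro ⟨ρ, hρ⟩ X' Y' X Y i' π' i π f g w' w - - ⟨σ'⟩ ⟨σ⟩ comm₁₂ comm₂₃
    obtain ⟨s, hs, hcomm⟩ := σ.exists_section_comp_eq ⟨f, g, h, comm₁₂.symm, comm₂₃.symm⟩ σ'.s_g hρ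
    exact ⟨σ'.s, s, σ'.s_g, hs, hcomm⟩
  have σ₀ : (ShortComplex.mk (0 : 0 ⟶ Z') (𝟙 Z') zero_comp).Splitting :=
    .ofIsZeroOfIsIso _ (isZero_zero A) (by dsimp; infer_instance)
  have σ := ShortComplex.Splitting.ofHasBinaryBiproduct Z' Z
  tfae_have 1 → 3 := fun H => by
    obtain ⟨r', r, -, hr, hcomm⟩ := H _ _ _ _ _ _ _ _ 0 (biprod.lift (-𝟙 Z') h) _ _
      σ₀.shortExact σ.shortExact ⟨σ₀⟩ ⟨σ⟩ (by simp) (by simp)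
    exact ⟨_, (biprod.lift_neg_id_comp_eq_zero_iff h hr).1 (by simpa using hcomm.symm)⟩
  tfae_have 2 → 3 := fun H => by
    obtain ⟨s', s, hs', -, hcomm⟩ := H _ _ _ _ _ _ _ _ 0 (biprod.lift (𝟙 Z') h) _ _
      σ₀.shortExact σ.shortExact ⟨σ₀⟩ ⟨σ⟩ (by simp) (by simp)
    obtain rfl : s' = 𝟙 Z' := by simpa using hs'
    exact ⟨s ≫ biprod.fst, by rw [← Category.assoc, ← hcomm, Category.id_comp, biprod.lift_fst]⟩
  tfae_finish
end

section
/- Let f : X' ⟶ X be a morphism in an abelian category A. The following are equivalent: (a) for every compatible-splitting datum (with f as left vertical map) there exist retractions r' : Y' ⟶ X' of i' and r : Y ⟶ X of i such that r' ≫ f = g ≫ r; (b) for every compatible-splitting datum (with f as left vertical map) there exist sections s' : Z' ⟶ Y' of π' and s : Z ⟶ Y of π such that s' ≫ g = h ≫ s; (c) f is a split epimorphism, i.e. there exists s : X ⟶ X' with s ≫ f = 𝟙_X. -/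
/-!
If `s ≫ f = 𝟙`, a given retraction of `i` (resp. section of `π'`) can be matched by correcting
the splitting of the other row: the defect of the square vanishes on `X'` (resp. is killed by
`π`), so by the splitting it factors through `π'` (resp. `i`), and since `f` is split epi the
correction can be lifted back to `X'`.

Conversely, test (a) and (b) on the morphism `(f, biprod.desc f (𝟙 X), 0)` from the split
sequence `X' → X' ⊞ X → X` to `X = X → 0`: a compatible retraction `r'` gives the section
`biprod.inr ≫ r'` of `f`, and a compatible section `s'` gives `-(s' ≫ biprod.fst)`.
-/

open CategoryTheory Limits ZeroObject

universe v u

namespace CategoryTheory.ShortComplex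

variable {C : Type*} [Category C] [Preadditive C]

namespace Splitting

variable {S : ShortComplex C} (σ : S.Splitting)

lemma g_s_comp_of_f_comp_eq_zero {W : C} {t : S.X₂ ⟶ W} (ht : S.f ≫ t = 0) :
    S.g ≫ σ.s ≫ t = t := by
  rw [← Category.assoc, σ.g_s, Preadditive.sub_comp, Category.id_comp, Category.assoc, ht,
    comp_zero, sub_zero]

lemma comp_r_f_of_comp_g_eq_zero {W : C} {e : W ⟶ S.X₂} (he : e ≫ S.g = 0) :
    e ≫ σ.r ≫ S.f = e := by
  rw [σ.r_f, Preadditive.comp_sub, Category.comp_id, ← Category.assoc, he, zero_comp,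
    sub_zero]

end Splitting

variable {S' S : ShortComplex C} (φ : S' ⟶ S) [IsSplitEpi φ.τ₁]

lemma exists_retraction_comp_eq_of_isSplitEpi (σ' : S'.Splitting) {r : S.X₂ ⟶ S.X₁}
    (hr : S.f ≫ r = 𝟙 _) : ∃ r' : S'.X₂ ⟶ S'.X₁, S'.f ≫ r' = 𝟙 _ ∧ r' ≫ φ.τ₁ = φ.τ₂ ≫ r := by
  set d := φ.τ₂ ≫ r - σ'.r ≫ φ.τ₁
  have hd : S'.f ≫ d = 0 := by
    simp only [d, Preadditive.comp_sub, ← φ.comm₁₂_assoc, hr, σ'.f_r_assoc, Category.comp_id,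
      sub_self]
  refine ⟨σ'.r + S'.g ≫ σ'.s ≫ d ≫ section_ φ.τ₁, ?_, ?_⟩
  · simp only [Preadditive.comp_add, σ'.f_r, S'.zero_assoc, zero_comp, add_zero]
  · simp only [Preadditive.add_comp, Category.assoc, IsSplitEpi.id, Category.comp_id,
      σ'.g_s_comp_of_f_comp_eq_zero hd, d, add_sub_cancel]

lemma exists_section_comp_eq_of_isSplitEpi (σ' : S'.Splitting) (σ : S.Splitting)
    {t : S.X₃ ⟶ S.X₂} (ht : t ≫ S.g = 𝟙 _) :
    ∃ s' : S'.X₃ ⟶ S'.X₂, s' ≫ S'.g = 𝟙 _ ∧ s' ≫ φ.τ₂ = φ.τ₃ ≫ t := by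
  set e := σ'.s ≫ φ.τ₂ - φ.τ₃ ≫ t
  have he : e ≫ S.g = 0 := by
    simp only [e, Preadditive.sub_comp, Category.assoc, φ.comm₂₃, ht, σ'.s_g_assoc,
      Category.comp_id, sub_self]
  refine ⟨σ'.s - e ≫ σ.r ≫ section_ φ.τ₁ ≫ S'.f, ?_, ?_⟩
  · simp only [Preadditive.sub_comp, σ'.s_g, Category.assoc, S'.zero, comp_zero, sub_zero]
  · rw [Preadditive.sub_comp, Category.assoc, Category.assoc, Category.assoc, ← φ.comm₁₂,
      IsSplitEpi.id_assoc, σ.comp_r_f_of_comp_g_eq_zero he, sub_sub_cancel]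

end CategoryTheory.ShortComplex

section BiprodDesc

variable {C : Type*} [Category C] [Preadditive C] {X' X : C}
  [HasBinaryBiproduct X' X] (f : X' ⟶ X)

lemma exists_section_of_comp_eq_biprod_desc {r' : X' ⊞ X ⟶ X'}
    (h : r' ≫ f = biprod.desc f (𝟙 X)) : ∃ s : X ⟶ X', s ≫ f = 𝟙 X :=
  ⟨biprod.inr ≫ r', by simp [h]⟩

lemma exists_section_of_comp_biprod_desc_eq_zero {s' : X ⟶ X' ⊞ X}
    (h₁ : s' ≫ biprod.snd = 𝟙 X) (h₂ : s' ≫ biprod.desc f (𝟙 X) = 0) :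
    ∃ s : X ⟶ X', s ≫ f = 𝟙 X := by
  refine ⟨-(s' ≫ biprod.fst), ?_⟩
  rw [biprod.desc_eq, Category.comp_id, Preadditive.comp_add, h₁, ← Category.assoc] at h₂
  rw [Preadditive.neg_comp, eq_neg_of_add_eq_zero_left h₂, neg_neg]

end BiprodDesc

/-- for a morphism `f : X' ⟶ X` in an abelian category `A`, the following
are equivalent: (a) every compatible-splitting datum with `f` as left vertical map
admits compatible retractions; (b) every compatible-splitting datum with `f` as left
vertical map admits compatible sections; (c) `f` is a split epimorphism. -/
theorem statement12 {A : Type u} [Category.{v} A] [Abelian A]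
    {X' X : A} (f : X' ⟶ X) :
    List.TFAE [
      ∀ (Y' Z' Y Z : A) (i' : X' ⟶ Y') (π' : Y' ⟶ Z') (i : X ⟶ Y) (π : Y ⟶ Z)
        (g : Y' ⟶ Y) (h : Z' ⟶ Z) (w' : i' ≫ π' = 0) (w : i ≫ π = 0),
        (ShortComplex.mk i' π' w').ShortExact → (ShortComplex.mk i π w).ShortExact →
        Nonempty (ShortComplex.mk i' π' w').Splitting →
        Nonempty (ShortComplex.mk i π w).Splitting →
        i' ≫ g = f ≫ i → π' ≫ h = g ≫ π →
        ∃ (r' : Y' ⟶ X') (r : Y ⟶ X), i' ≫ r' = 𝟙 X' ∧ i ≫ r = 𝟙 X ∧ r' ≫ f = g ≫ r,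
      ∀ (Y' Z' Y Z : A) (i' : X' ⟶ Y') (π' : Y' ⟶ Z') (i : X ⟶ Y) (π : Y ⟶ Z)
        (g : Y' ⟶ Y) (h : Z' ⟶ Z) (w' : i' ≫ π' = 0) (w : i ≫ π = 0),
        (ShortComplex.mk i' π' w').ShortExact → (ShortComplex.mk i π w).ShortExact →
        Nonempty (ShortComplex.mk i' π' w').Splitting →
        Nonempty (ShortComplex.mk i π w).Splitting →
        i' ≫ g = f ≫ i → π' ≫ h = g ≫ π →
        ∃ (s' : Z' ⟶ Y') (s : Z ⟶ Y), s' ≫ π' = 𝟙 Z' ∧ s ≫ π = 𝟙 Z ∧ s' ≫ g = h ≫ s,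
      ∃ s : X ⟶ X', s ≫ f = 𝟙 X] := by
  have σ₁ := ShortComplex.Splitting.ofHasBinaryBiproduct X' X
  have σ₂ := ShortComplex.Splitting.ofIsIsoOfIsZero
    (ShortComplex.mk (𝟙 X) (0 : X ⟶ 0) (by simp)) inferInstance (isZero_zero A)
  tfae_have 3 → 1 := by
    rintro ⟨s, hs⟩ Y' Z' Y Z i' π' i π g h w' w - - ⟨σ'⟩ ⟨σ⟩ hig hπh
    have : IsSplitEpi f := IsSplitEpi.mk' ⟨s, hs⟩
    obtain ⟨r', hr', hcomm⟩ :=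
      ShortComplex.exists_retraction_comp_eq_of_isSplitEpi ⟨f, g, h, hig.symm, hπh.symm⟩ σ' σ.f_r
    exact ⟨r', σ.r, hr', σ.f_r, hcomm⟩
  tfae_have 3 → 2 := by
    rintro ⟨s, hs⟩ Y' Z' Y Z i' π' i π g h w' w - - ⟨σ'⟩ ⟨σ⟩ hig hπh
    have : IsSplitEpi f := IsSplitEpi.mk' ⟨s, hs⟩
    obtain ⟨s', hs', hcomm⟩ :=
      ShortComplex.exists_section_comp_eq_of_isSplitEpi ⟨f, g, h, hig.symm, hπh.symm⟩ σ' σ σ.s_g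
    exact ⟨s', σ.s, hs', σ.s_g, hcomm⟩
  tfae_have 1 → 3 := by
    intro H
    obtain ⟨r', r, -, hr, hcomm⟩ := H _ _ _ _ _ _ _ _ (biprod.desc f (𝟙 X)) 0 _ _
      σ₁.shortExact σ₂.shortExact ⟨σ₁⟩ ⟨σ₂⟩ (by simp) (by simp)
    rw [Category.id_comp] at hr
    exact exists_section_of_comp_eq_biprod_desc f (by rw [hcomm, hr, Category.comp_id])
  tfae_have 2 → 3 := by
    intro H
    obtain ⟨s', s, hs', -, hcomm⟩ := H _ _ _ _ _ _ _ _ (biprod.desc f (𝟙 X)) 0 _ _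
      σ₁.shortExact σ₂.shortExact ⟨σ₁⟩ ⟨σ₂⟩ (by simp) (by simp)
    exact exists_section_of_comp_biprod_desc_eq_zero f hs' (by rw [hcomm, zero_comp])
  tfae_finish
end
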